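/- arXiv:2407.08562 — 6 statements merged into one kernel-verified Lean document; each statement's English description precedes it below -/
import Mathlib

section
/- Let G be a finite simple graph with maximum degree Δ. Then there exist Δ spanning subgraphs F_1, …, F_Δ of G, each of which is a forest (i.e., acyclic), such that every edge of G belongs to at least one F_i. In particular, the arboricity of G is at most its maximum degree. -/
/-!
Fix any linear order on the vertices. Every vertex `v` labels the edges to its neighbours
injectively by `Δ` colours, and an edge `vw` with `v < w` takes the colour that `v` gives it.
In one colour class every vertex has at most one greater neighbour, so the class is a forest:
the least vertex of a cycle would have two greater neighbours on it.
-/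

namespace SimpleGraph

variable {V : Type*}

theorem isAcyclic_of_forall_subsingleton_greater_neighbors [LinearOrder V] {G : SimpleGraph V}
    (h : ∀ v, {w | G.Adj v w ∧ v < w}.Subsingleton) : G.IsAcyclic := by
  intro u c hc
  obtain ⟨m, hm, hmin⟩ := c.support.toFinset.exists_min_image id ⟨u, by simp⟩
  rw [List.mem_toFinset] at hm
  have hc' := hc.rotate hm
  set c' := c.rotate m hm
  have greater {w} (hadj : G.Adj m w) (hw : w ∈ c'.support) : w ∈ {w | G.Adj m w ∧ m < w} :=
    ⟨hadj, (hmin w (by simpa [c'] using hw)).lt_of_ne hadj.ne⟩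
  exact hc'.snd_ne_penultimate <| h m
    (greater (c'.adj_snd hc'.not_nil) (c'.getVert_mem_support 1))
    (greater (c'.adj_penultimate hc'.not_nil).symm (c'.getVert_mem_support _))

theorem exists_isAcyclic_cover_of_degree_le (G : SimpleGraph V) [G.LocallyFinite] {n : ℕ}
    (hdeg : ∀ v, G.degree v ≤ n) :
    ∃ F : Fin n → SimpleGraph V,
      (∀ i, F i ≤ G ∧ (F i).IsAcyclic) ∧
      ∀ e ∈ G.edgeSet, ∃ i, e ∈ (F i).edgeSet := by
  let := IsWellOrder.linearOrder (WellOrderingRel (α := V))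
  obtain label : ∀ v, G.neighborSet v ↪ Fin n := fun v =>
    (Function.Embedding.nonempty_of_card_le <| by
      rw [card_neighborSet_eq_degree, Fintype.card_fin]; exact hdeg v).some
  let F (i : Fin n) : SimpleGraph V :=
    fromRel fun v w => ∃ h : G.Adj v w, v < w ∧ label v ⟨w, h⟩ = i
  refine ⟨F, fun i => ⟨?_, ?_⟩, ?_⟩
  · rintro v w ⟨-, ⟨h, -⟩ | ⟨h, -⟩⟩
    exacts [h, h.symm]
  · have label_eq {v w} (hvw : (F i).Adj v w) (hlt : v < w) :
        ∃ h : G.Adj v w, label v ⟨w, h⟩ = i := by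
      obtain ⟨-, ⟨h, -, hi⟩ | ⟨-, hgt, -⟩⟩ := hvw
      exacts [⟨h, hi⟩, absurd hlt hgt.not_gt]
    refine isAcyclic_of_forall_subsingleton_greater_neighbors
      fun v w₁ ⟨hw₁, hlt₁⟩ w₂ ⟨hw₂, hlt₂⟩ => ?_
    obtain ⟨h₁, hi₁⟩ := label_eq hw₁ hlt₁
    obtain ⟨h₂, hi₂⟩ := label_eq hw₂ hlt₂
    exact congrArg Subtype.val ((label v).injective (hi₁.trans hi₂.symm))
  · refine Sym2.ind fun v w (hvw : G.Adj v w) => ?_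
    rcases hvw.ne.lt_or_gt with hlt | hgt
    · exact ⟨label v ⟨w, hvw⟩, hvw.ne, .inl ⟨hvw, hlt, rfl⟩⟩
    · exact ⟨label w ⟨v, hvw.symm⟩, hvw.ne, .inr ⟨hvw.symm, hgt, rfl⟩⟩

end SimpleGraph

theorem arboricity_le_maxDegree_general {V : Type*} [Fintype V]
    (G : SimpleGraph V) [DecidableRel G.Adj] :
    ∃ F : Fin G.maxDegree → SimpleGraph V,
      (∀ i, F i ≤ G ∧ (F i).IsAcyclic) ∧
      ∀ e ∈ G.edgeSet, ∃ i, e ∈ (F i).edgeSet :=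
  G.exists_isAcyclic_cover_of_degree_le G.degree_le_maxDegree

/-- A finite simple graph with maximum degree `Δ` can be covered by `Δ`
spanning forests; in particular its arboricity is at most its maximum degree. -/
theorem arboricity_le_maxDegree {V : Type*} [Fintype V] [DecidableEq V]
    (G : SimpleGraph V) [DecidableRel G.Adj] :
    ∃ F : Fin G.maxDegree → SimpleGraph V,
      (∀ i, F i ≤ G ∧ (F i).IsAcyclic) ∧
      ∀ e ∈ G.edgeSet, ∃ i, e ∈ (F i).edgeSet :=
  arboricity_le_maxDegree_general G
end

section
/- Let G be a finite simple graph that is 4-cycle-free. Then the number of triangles of G is at most the number of edges of G. -/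
/-- A 4-cycle in a simple graph: four pairwise distinct vertices `a, b, c, d` with
`a ~ b`, `b ~ c`, `c ~ d`, `d ~ a`. -/
def HasFourCycle {V : Type*} (G : SimpleGraph V) : Prop :=
  ∃ a b c d : V, a ≠ b ∧ a ≠ c ∧ a ≠ d ∧ b ≠ c ∧ b ≠ d ∧ c ≠ d ∧
    G.Adj a b ∧ G.Adj b c ∧ G.Adj c d ∧ G.Adj d a

/-!
Two distinct triangles sharing an edge `uv` have third vertices `w₁ ≠ w₂`, and `u w₁ v w₂` is a
4-cycle. So in a 4-cycle-free graph every edge lies in at most one triangle, and since each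
triangle has three edges there are in fact at most a third as many triangles as edges.
-/

open Finset

theorem Finset.exists_eq_insert_insert_singleton_of_card_eq_three {α : Type*} [DecidableEq α]
    {s : Finset α} (hs : #s = 3) {a b : α} (ha : a ∈ s) (hb : b ∈ s) (hab : a ≠ b) :
    ∃ c ∈ s, c ≠ a ∧ c ≠ b ∧ s = {a, b, c} := by
  have hb' : b ∈ s.erase a := mem_erase.2 ⟨hab.symm, hb⟩
  obtain ⟨c, hc⟩ : ∃ c, (s.erase a).erase b = {c} := by
    rw [← card_eq_one, card_erase_of_mem hb', card_erase_of_mem ha, hs]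
  have hc' : c ∈ (s.erase a).erase b := hc ▸ mem_singleton_self c
  obtain ⟨hcb, hca, hcs⟩ : c ≠ b ∧ c ≠ a ∧ c ∈ s := by simpa only [mem_erase] using hc'
  refine ⟨c, hcs, hca, hcb, ?_⟩
  rw [← hc, insert_erase hb', insert_erase ha]

namespace SimpleGraph

theorem edgeDisjointTriangles_of_not_hasFourCycle {V : Type*} {G : SimpleGraph V}
    (h4 : ¬HasFourCycle G) : G.EdgeDisjointTriangles := by
  classical
  intro s hs t ht hst
  rw [mem_cliqueSet_iff] at hs ht
  by_contra hnt
  obtain ⟨u, ⟨hus, hut⟩, v, ⟨hvs, hvt⟩, huv⟩ := Set.not_subsingleton_iff.1 hnt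
  obtain ⟨w₁, hw₁, hw₁u, hw₁v, rfl⟩ :=
    exists_eq_insert_insert_singleton_of_card_eq_three hs.card_eq hus hvs huv
  obtain ⟨w₂, hw₂, hw₂u, hw₂v, rfl⟩ :=
    exists_eq_insert_insert_singleton_of_card_eq_three ht.card_eq hut hvt huv
  have hw : w₁ ≠ w₂ := by
    rintro rfl
    exact hst rfl
  exact h4 ⟨u, w₁, v, w₂, hw₁u.symm, huv, hw₂u.symm, hw₁v, hw, hw₂v.symm,
    hs.isClique hus hw₁ hw₁u.symm, hs.isClique hw₁ hvs hw₁v,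
    ht.isClique hvt hw₂ hw₂v.symm, ht.isClique hw₂ hut hw₂u⟩

end SimpleGraph

/-- A finite 4-cycle-free simple graph has at most as many triangles
as edges. -/
theorem triangle_count_le_edge_count_of_fourCycleFree {V : Type*} [Fintype V] [DecidableEq V]
    (G : SimpleGraph V) [DecidableRel G.Adj] (h4 : ¬ HasFourCycle G) :
    (G.cliqueFinset 3).card ≤ G.edgeFinset.card :=
  calc #(G.cliqueFinset 3) ≤ 3 * #(G.cliqueFinset 3) := Nat.le_mul_of_pos_left _ three_pos
    _ ≤ #G.edgeFinset := (G.edgeDisjointTriangles_of_not_hasFourCycle h4).card_edgeFinset_le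
end

section
/- Let G be a tripartite simple graph with parts A, B, C and let G' be the auxiliary 4-partite graph built from G on vertex set A ⊔ B ⊔ C ⊔ C'. Then for every a ∈ A, b ∈ B, c ∈ C: the set {a,b,c} is a triangle of G if and only if (a, b, c, c') is a 4-cycle of G'. Consequently, the map sending a triangle {a,b,c} of G (with a ∈ A, b ∈ B, c ∈ C) to the 4-cycle (a,b,c,c') of G' is injective. -/
/-- A 4-cycle in a simple graph, as an ordered quadruple of pairwise distinct vertices
`a, b, c, d` with `a ~ b`, `b ~ c`, `c ~ d`, `d ~ a`. -/
def IsFourCycle {V : Type*} (G : SimpleGraph V) (a b c d : V) : Prop :=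
  a ≠ b ∧ a ≠ c ∧ a ≠ d ∧ b ≠ c ∧ b ≠ d ∧ c ≠ d ∧
    G.Adj a b ∧ G.Adj b c ∧ G.Adj c d ∧ G.Adj d a

section AuxGraph

variable {A B C : Type*}

/-- The auxiliary 4-partite graph `G'` on `A ⊕ B ⊕ C ⊕ C'` built from a tripartite graph `G`
on `A ⊕ B ⊕ C`: it keeps the `A`–`B` and `B`–`C` edges of `G`, replaces each `C`–`A` edge of
`G` by the corresponding `C'`–`A` edge, and adds a perfect matching between `C` and its
copy `C'`. -/
def auxGraph (G : SimpleGraph (A ⊕ B ⊕ C)) : SimpleGraph (A ⊕ B ⊕ C ⊕ C) :=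
  SimpleGraph.fromRel fun x y =>
    match x, y with
    | .inl a, .inr (.inl b) => G.Adj (.inl a) (.inr (.inl b))
    | .inr (.inl b), .inr (.inr (.inl c)) => G.Adj (.inr (.inl b)) (.inr (.inr c))
    | .inr (.inr (.inr c)), .inl a => G.Adj (.inr (.inr c)) (.inl a)
    | .inr (.inr (.inl c)), .inr (.inr (.inr c')) => c = c'
    | _, _ => False

end AuxGraph

/-- For a tripartite graph `G` with parts `A`, `B`, `C` and its auxiliary graph
`G'`: for all `a ∈ A`, `b ∈ B`, `c ∈ C`, the set `{a, b, c}` is a triangle of `G` iff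
`(a, b, c, c')` is a 4-cycle of `G'`; consequently the map sending such a triangle to this
4-cycle is injective. -/
theorem triangle_iff_fourCycle_auxGraph {A B C : Type*}
    [DecidableEq A] [DecidableEq B] [DecidableEq C]
    (G : SimpleGraph (A ⊕ B ⊕ C))
    (hA : ∀ a a' : A, ¬ G.Adj (.inl a) (.inl a'))
    (hB : ∀ b b' : B, ¬ G.Adj (.inr (.inl b)) (.inr (.inl b')))
    (hC : ∀ c c' : C, ¬ G.Adj (.inr (.inr c)) (.inr (.inr c'))) :
    (∀ (a : A) (b : B) (c : C),
      G.IsNClique 3 {Sum.inl a, Sum.inr (Sum.inl b), Sum.inr (Sum.inr c)} ↔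
      IsFourCycle (auxGraph G) (Sum.inl a) (Sum.inr (Sum.inl b))
        (Sum.inr (Sum.inr (Sum.inl c))) (Sum.inr (Sum.inr (Sum.inr c)))) ∧
    (∀ (a₁ a₂ : A) (b₁ b₂ : B) (c₁ c₂ : C),
      G.IsNClique 3 {Sum.inl a₁, Sum.inr (Sum.inl b₁), Sum.inr (Sum.inr c₁)} →
      G.IsNClique 3 {Sum.inl a₂, Sum.inr (Sum.inl b₂), Sum.inr (Sum.inr c₂)} →
      ((Sum.inl a₁, Sum.inr (Sum.inl b₁), Sum.inr (Sum.inr (Sum.inl c₁)),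
          Sum.inr (Sum.inr (Sum.inr c₁))) :
          (A ⊕ B ⊕ C ⊕ C) × (A ⊕ B ⊕ C ⊕ C) × (A ⊕ B ⊕ C ⊕ C) × (A ⊕ B ⊕ C ⊕ C)) =
        (Sum.inl a₂, Sum.inr (Sum.inl b₂), Sum.inr (Sum.inr (Sum.inl c₂)),
          Sum.inr (Sum.inr (Sum.inr c₂))) →
      ({Sum.inl a₁, Sum.inr (Sum.inl b₁), Sum.inr (Sum.inr c₁)} : Finset (A ⊕ B ⊕ C)) =
        {Sum.inl a₂, Sum.inr (Sum.inl b₂), Sum.inr (Sum.inr c₂)}) := by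
  constructor
  · intro a b c
    rw [SimpleGraph.is3Clique_triple_iff]
    constructor
    · rintro ⟨hab, hac, hbc⟩
      refine ⟨by simp, by simp, by simp, by simp, by simp, by simp, ?_, ?_, ?_, ?_⟩ <;>
        simp [auxGraph, SimpleGraph.fromRel_adj, hab, hbc, hac.symm]
    · rintro ⟨-, -, -, -, -, -, h1, h2, h3, h4⟩
      simp only [auxGraph, SimpleGraph.fromRel_adj] at h1 h2 h4
      exact ⟨by tauto, (by tauto : G.Adj _ _).symm, by tauto⟩
  · intro a₁ a₂ b₁ b₂ c₁ c₂ _ _ h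
    simp only [Prod.mk.injEq, Sum.inl.injEq, Sum.inr.injEq] at h
    obtain ⟨rfl, rfl, rfl, -⟩ := h
    rfl
end

section
/- Let G be a tripartite simple graph with parts A, B, C and let G' be the auxiliary 4-partite graph built from G on vertex set A ⊔ B ⊔ C ⊔ C'. Then every 4-cycle of G' is of exactly one of the following two kinds: (i) it contains a matching edge {c, c'} for some c ∈ C, in which case it equals (a, b, c, c') for some a ∈ A, b ∈ B such that {a,b,c} is a triangle of G; or (ii) it contains no matching edge, in which case replacing every vertex c' ∈ C' appearing on it by the corresponding vertex c ∈ C yields a 4-cycle of G. -/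
section AuxGraph

variable {A B C : Type*}

/-- The projection `A ⊕ B ⊕ C ⊕ C' → A ⊕ B ⊕ C` replacing every vertex `c' ∈ C'` by the
corresponding vertex `c ∈ C`. -/
def projAux : (A ⊕ B ⊕ C ⊕ C) → (A ⊕ B ⊕ C)
  | .inl a => .inl a
  | .inr (.inl b) => .inr (.inl b)
  | .inr (.inr (.inl c)) => .inr (.inr c)
  | .inr (.inr (.inr c)) => .inr (.inr c)

end AuxGraph

set_option maxHeartbeats 1000000 in
/-- Every 4-cycle of the auxiliary graph `G'` is of exactly one of two kinds:
(i) it contains a matching edge `{c, c'}`, in which case its vertex set is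
`{a, b, c, c'}` for some `a ∈ A`, `b ∈ B` with `{a, b, c}` a triangle of `G`; or
(ii) it contains no matching edge, in which case replacing every vertex of `C'` by the
corresponding vertex of `C` yields a 4-cycle of `G`. -/
theorem auxGraph_fourCycle_dichotomy {A B C : Type*}
    [DecidableEq A] [DecidableEq B] [DecidableEq C]
    (G : SimpleGraph (A ⊕ B ⊕ C))
    (hA : ∀ a a' : A, ¬ G.Adj (.inl a) (.inl a'))
    (hB : ∀ b b' : B, ¬ G.Adj (.inr (.inl b)) (.inr (.inl b')))
    (hC : ∀ c c' : C, ¬ G.Adj (.inr (.inr c)) (.inr (.inr c')))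
    (x y z w : A ⊕ B ⊕ C ⊕ C) (hcyc : IsFourCycle (auxGraph G) x y z w) :
    ((∃ c : C, s(Sum.inr (Sum.inr (Sum.inl c)), Sum.inr (Sum.inr (Sum.inr c))) ∈
        ({s(x, y), s(y, z), s(z, w), s(w, x)} : Finset (Sym2 (A ⊕ B ⊕ C ⊕ C)))) ∧
      (∃ (a : A) (b : B) (c : C),
        G.IsNClique 3 {Sum.inl a, Sum.inr (Sum.inl b), Sum.inr (Sum.inr c)} ∧
        ({x, y, z, w} : Finset (A ⊕ B ⊕ C ⊕ C)) =
          {Sum.inl a, Sum.inr (Sum.inl b), Sum.inr (Sum.inr (Sum.inl c)),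
            Sum.inr (Sum.inr (Sum.inr c))})) ∨
    ((¬ ∃ c : C, s(Sum.inr (Sum.inr (Sum.inl c)), Sum.inr (Sum.inr (Sum.inr c))) ∈
        ({s(x, y), s(y, z), s(z, w), s(w, x)} : Finset (Sym2 (A ⊕ B ⊕ C ⊕ C)))) ∧
      IsFourCycle G (projAux x) (projAux y) (projAux z) (projAux w)) := by
  obtain ⟨hxy, hxz, hxw, hyz, hyw, hzw, axy, ayz, azw, awx⟩ := hcyc
  rcases x with a1|b1|c1|d1 <;> rcases y with a2|b2|c2|d2 <;>
    rcases z with a3|b3|c3|d3 <;> rcases w with a4|b4|c4|d4 <;>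
    simp only [auxGraph, SimpleGraph.fromRel_adj, ne_eq, Sum.inl.injEq, Sum.inr.injEq,
      reduceCtorEq, false_or, or_false, not_false_eq_true, true_and, and_true, false_and,
      and_false, or_self] at axy ayz azw awx hxy hxz hxw hyz hyw hzw <;>
    first
      | exact absurd axy id | exact absurd ayz id | exact absurd azw id | exact absurd awx id
      | (exfalso; subst_vars; simp_all; done)
      | (left; subst azw; refine ⟨⟨c3, by simp⟩, a1, b2, c3, SimpleGraph.is3Clique_triple_iff.mpr ⟨?_, ?_, ?_⟩, by ext v; simp; try tauto⟩ <;> first | assumption | exact axy.symm | exact ayz.symm | exact awx.symm)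
      | (left; subst ayz; refine ⟨⟨c2, by simp⟩, a4, b1, c2, SimpleGraph.is3Clique_triple_iff.mpr ⟨?_, ?_, ?_⟩, by ext v; simp; try tauto⟩ <;> first | assumption | exact axy.symm | exact azw.symm | exact awx.symm)
      | (left; subst axy; refine ⟨⟨c1, by simp⟩, a3, b4, c1, SimpleGraph.is3Clique_triple_iff.mpr ⟨?_, ?_, ?_⟩, by ext v; simp; try tauto⟩ <;> first | assumption | exact ayz.symm | exact azw.symm | exact awx.symm)
      | (left; subst awx; refine ⟨⟨c4, by simp⟩, a2, b3, c4, SimpleGraph.is3Clique_triple_iff.mpr ⟨?_, ?_, ?_⟩, by ext v; simp; try tauto⟩ <;> first | assumption | exact axy.symm | exact ayz.symm | exact azw.symm)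
      | (left; subst axy; refine ⟨⟨c2, by simp⟩, a4, b3, c2, SimpleGraph.is3Clique_triple_iff.mpr ⟨?_, ?_, ?_⟩, by ext v; simp; try tauto⟩ <;> first | assumption | exact ayz.symm | exact azw.symm | exact awx.symm)
      | (left; subst awx; refine ⟨⟨c1, by simp⟩, a3, b2, c1, SimpleGraph.is3Clique_triple_iff.mpr ⟨?_, ?_, ?_⟩, by ext v; simp; try tauto⟩ <;> first | assumption | exact axy.symm | exact ayz.symm | exact azw.symm)
      | (left; subst azw; refine ⟨⟨c4, by simp⟩, a2, b1, c4, SimpleGraph.is3Clique_triple_iff.mpr ⟨?_, ?_, ?_⟩, by ext v; simp; try tauto⟩ <;> first | assumption | exact axy.symm | exact ayz.symm | exact awx.symm)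
      | (left; subst ayz; refine ⟨⟨c3, by simp⟩, a1, b4, c3, SimpleGraph.is3Clique_triple_iff.mpr ⟨?_, ?_, ?_⟩, by ext v; simp; try tauto⟩ <;> first | assumption | exact axy.symm | exact azw.symm | exact awx.symm)
      | (right; refine ⟨by simp, ?_, ?_, ?_, ?_, ?_, ?_, ?_, ?_, ?_, ?_⟩ <;>
          simp only [projAux] <;>
          first | exact axy | exact axy.symm | exact ayz | exact ayz.symm | exact azw | exact azw.symm | exact awx | exact awx.symm | simpa using hxy | simpa using hxz | simpa using hxw | simpa using hyz | simpa using hyw | simpa using hzw | simp)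
end

section
/- Let G be a finite tripartite simple graph with parts A, B, C and let G' be the auxiliary 4-partite graph built from G on vertex set A ⊔ B ⊔ C ⊔ C'. Let t₃(G) denote the number of triangles of G, and let c₄(H) denote the number of 4-cycles of a graph H counted as 4-element vertex sets inducing at least one 4-cycle. Then t₃(G) ≤ c₄(G') ≤ t₃(G) + c₄(G). -/
/-- The number of 4-cycles of `H`, counted as 4-element vertex sets carrying at least one
4-cycle. -/
noncomputable def fourCycleCount {V : Type*} [DecidableEq V] (H : SimpleGraph V) : ℕ :=
  {s : Finset V | ∃ a b c d : V, s = {a, b, c, d} ∧ IsFourCycle H a b c d}.ncard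

namespace Aux6

variable {A B C : Type*}

/-- fold map -/
def pf : A ⊕ B ⊕ C ⊕ C → A ⊕ B ⊕ C
  | .inl a => .inl a
  | .inr (.inl b) => .inr (.inl b)
  | .inr (.inr (.inl c)) => .inr (.inr c)
  | .inr (.inr (.inr c)) => .inr (.inr c)

def embC : A ⊕ B ⊕ C → A ⊕ B ⊕ C ⊕ C
  | .inl a => .inl a
  | .inr (.inl b) => .inr (.inl b)
  | .inr (.inr c) => .inr (.inr (.inl c))

def embD : A ⊕ B ⊕ C → A ⊕ B ⊕ C ⊕ C
  | .inl a => .inl a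
  | .inr (.inl b) => .inr (.inl b)
  | .inr (.inr c) => .inr (.inr (.inr c))

@[simp] lemma pf_embC (v : A ⊕ B ⊕ C) : pf (embC v) = v := by
  rcases v with a | b | c <;> rfl

@[simp] lemma pf_embD (v : A ⊕ B ⊕ C) : pf (embD v) = v := by
  rcases v with a | b | c <;> rfl

variable {G : SimpleGraph (A ⊕ B ⊕ C)}

lemma adj_AB {a : A} {b : B} (h : G.Adj (.inl a) (.inr (.inl b))) :
    (auxGraph G).Adj (Sum.inl a) (Sum.inr (Sum.inl b)) := by
  unfold auxGraph
  rw [SimpleGraph.fromRel_adj]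
  exact ⟨by simp, Or.inl h⟩

lemma adj_BC {b : B} {c : C} (h : G.Adj (.inr (.inl b)) (.inr (.inr c))) :
    (auxGraph G).Adj (Sum.inr (Sum.inl b)) (Sum.inr (Sum.inr (Sum.inl c))) := by
  unfold auxGraph
  rw [SimpleGraph.fromRel_adj]
  exact ⟨by simp, Or.inl h⟩

lemma adj_CD {c : C} :
    (auxGraph G).Adj (Sum.inr (Sum.inr (Sum.inl c))) (Sum.inr (Sum.inr (Sum.inr c))) := by
  unfold auxGraph
  rw [SimpleGraph.fromRel_adj]
  exact ⟨by simp, Or.inl rfl⟩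

lemma adj_DA {c : C} {a : A} (h : G.Adj (.inr (.inr c)) (.inl a)) :
    (auxGraph G).Adj (Sum.inr (Sum.inr (Sum.inr c))) (Sum.inl a) := by
  unfold auxGraph
  rw [SimpleGraph.fromRel_adj]
  exact ⟨by simp, Or.inl h⟩

lemma adjA {a : A} {y : A ⊕ B ⊕ C ⊕ C} (h : (auxGraph G).Adj (Sum.inl a) y) :
    (∃ b : B, y = Sum.inr (Sum.inl b) ∧ G.Adj (.inl a) (.inr (.inl b))) ∨
    (∃ c : C, y = Sum.inr (Sum.inr (Sum.inr c)) ∧ G.Adj (.inr (.inr c)) (.inl a)) := by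
  unfold auxGraph at h
  rw [SimpleGraph.fromRel_adj] at h
  obtain ⟨-, h | h⟩ := h <;> rcases y with a' | b | c | c <;>
    first
      | exact False.elim h
      | exact Or.inl ⟨_, rfl, h⟩
      | exact Or.inr ⟨_, rfl, h⟩

lemma adjB {b : B} {y : A ⊕ B ⊕ C ⊕ C} (h : (auxGraph G).Adj (Sum.inr (Sum.inl b)) y) :
    (∃ a : A, y = Sum.inl a ∧ G.Adj (.inl a) (.inr (.inl b))) ∨
    (∃ c : C, y = Sum.inr (Sum.inr (Sum.inl c)) ∧ G.Adj (.inr (.inl b)) (.inr (.inr c))) := by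
  unfold auxGraph at h
  rw [SimpleGraph.fromRel_adj] at h
  obtain ⟨-, h | h⟩ := h <;> rcases y with a | b' | c | c <;>
    first
      | exact False.elim h
      | exact Or.inl ⟨_, rfl, h⟩
      | exact Or.inr ⟨_, rfl, h⟩

lemma adjC {c : C} {y : A ⊕ B ⊕ C ⊕ C} (h : (auxGraph G).Adj (Sum.inr (Sum.inr (Sum.inl c))) y) :
    (∃ b : B, y = Sum.inr (Sum.inl b) ∧ G.Adj (.inr (.inl b)) (.inr (.inr c))) ∨
    y = Sum.inr (Sum.inr (Sum.inr c)) := by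
  unfold auxGraph at h
  rw [SimpleGraph.fromRel_adj] at h
  obtain ⟨-, h | h⟩ := h <;> rcases y with a | b | c' | c' <;>
    first
      | exact False.elim h
      | exact Or.inl ⟨_, rfl, h⟩
      | exact Or.inr (by rw [h])
      | exact Or.inr (by rw [← h])

lemma adjD {c : C} {y : A ⊕ B ⊕ C ⊕ C} (h : (auxGraph G).Adj (Sum.inr (Sum.inr (Sum.inr c))) y) :
    (∃ a : A, y = Sum.inl a ∧ G.Adj (.inr (.inr c)) (.inl a)) ∨
    y = Sum.inr (Sum.inr (Sum.inl c)) := by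
  unfold auxGraph at h
  rw [SimpleGraph.fromRel_adj] at h
  obtain ⟨-, h | h⟩ := h <;> rcases y with a | b | c' | c' <;>
    first
      | exact False.elim h
      | exact Or.inl ⟨_, rfl, h⟩
      | exact Or.inr (by rw [h])
      | exact Or.inr (by rw [← h])


lemma pf_eq {x y : A ⊕ B ⊕ C ⊕ C} (h : pf x = pf y) (hne : x ≠ y) :
    (∃ c : C, x = Sum.inr (Sum.inr (Sum.inl c)) ∧ y = Sum.inr (Sum.inr (Sum.inr c))) ∨
    (∃ c : C, x = Sum.inr (Sum.inr (Sum.inr c)) ∧ y = Sum.inr (Sum.inr (Sum.inl c))) := by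
  rcases x with a | b | c | c <;> rcases y with a' | b' | c' | c' <;> simp_all [pf]

lemma pf_eqA {x : A ⊕ B ⊕ C ⊕ C} {a : A} (h : pf x = Sum.inl a) : x = Sum.inl a := by
  rcases x with a' | b | c | c <;> simp_all [pf]

lemma pf_eqB {x : A ⊕ B ⊕ C ⊕ C} {b : B} (h : pf x = Sum.inr (Sum.inl b)) :
    x = Sum.inr (Sum.inl b) := by
  rcases x with a | b' | c | c <;> simp_all [pf]

lemma aux_fold {u v : A ⊕ B ⊕ C ⊕ C} (h : (auxGraph G).Adj u v) :
    pf u = pf v ∨ G.Adj (pf u) (pf v) := by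
  rcases u with a | b | c | c
  · rcases adjA h with ⟨b, rfl, hg⟩ | ⟨c, rfl, hg⟩
    · exact Or.inr hg
    · exact Or.inr hg.symm
  · rcases adjB h with ⟨a, rfl, hg⟩ | ⟨c, rfl, hg⟩
    · exact Or.inr hg.symm
    · exact Or.inr hg
  · rcases adjC h with ⟨b, rfl, hg⟩ | rfl
    · exact Or.inr hg.symm
    · exact Or.inl rfl
  · rcases adjD h with ⟨a, rfl, hg⟩ | rfl
    · exact Or.inr hg
    · exact Or.inl rfl

lemma cycle_two_nbrs {V : Type*} [DecidableEq V] {H : SimpleGraph V} {a b c d : V}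
    {s : Finset V} (hs : s = {a, b, c, d}) (h : IsFourCycle H a b c d) {w : V} (hw : w ∈ s) :
    ∃ n₁ n₂, n₁ ∈ s ∧ n₂ ∈ s ∧ n₁ ≠ n₂ ∧ H.Adj w n₁ ∧ H.Adj w n₂ := by
  subst hs
  obtain ⟨hab, hac, had, hbc, hbd, hcd, e1, e2, e3, e4⟩ := h
  simp only [Finset.mem_insert, Finset.mem_singleton] at hw
  rcases hw with rfl | rfl | rfl | rfl
  · exact ⟨b, d, by simp, by simp, hbd, e1, e4.symm⟩
  · exact ⟨a, c, by simp, by simp, hac, e1.symm, e2⟩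
  · exact ⟨b, d, by simp, by simp, hbd, e2.symm, e3⟩
  · exact ⟨c, a, by simp, by simp, fun h' => hac h'.symm, e3.symm, e4⟩

lemma card4 {V : Type*} [DecidableEq V] {H : SimpleGraph V} {a b c d : V}
    (h : IsFourCycle H a b c d) : ({a, b, c, d} : Finset V).card = 4 := by
  obtain ⟨hab, hac, had, hbc, hbd, hcd, -⟩ := h
  rw [Finset.card_insert_of_notMem (by simp [hab, hac, had]),
    Finset.card_insert_of_notMem (by simp [hbc, hbd]),
    Finset.card_insert_of_notMem (by simp [hcd]), Finset.card_singleton]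


/-- Structure of a 4-cycle set of `auxGraph G` containing a matched pair. -/
lemma Mstruct [DecidableEq A] [DecidableEq B] [DecidableEq C]
    {s : Finset (A ⊕ B ⊕ C ⊕ C)} {w x y z : A ⊕ B ⊕ C ⊕ C}
    (hs : s = {w, x, y, z}) (hcyc : IsFourCycle (auxGraph G) w x y z) {c : C}
    (h1 : Sum.inr (Sum.inr (Sum.inl c)) ∈ s) (h2 : Sum.inr (Sum.inr (Sum.inr c)) ∈ s) :
    ∃ (a : A) (b : B),
      s = {Sum.inl a, Sum.inr (Sum.inl b), Sum.inr (Sum.inr (Sum.inl c)),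
        Sum.inr (Sum.inr (Sum.inr c))} ∧
      G.Adj (.inl a) (.inr (.inl b)) ∧ G.Adj (.inr (.inl b)) (.inr (.inr c)) ∧
      G.Adj (.inr (.inr c)) (.inl a) := by
  have hcard : s.card = 4 := by rw [hs]; exact card4 hcyc
  -- a B-neighbour of the C-vertex
  obtain ⟨n₁, n₂, hn₁, hn₂, hnne, e₁, e₂⟩ := cycle_two_nbrs hs hcyc h1
  have hb : ∃ b : B, Sum.inr (Sum.inl b) ∈ s ∧ G.Adj (.inr (.inl b)) (.inr (.inr c)) := by
    rcases adjC e₁ with ⟨b, rfl, hg⟩ | rfl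
    · exact ⟨b, hn₁, hg⟩
    · rcases adjC e₂ with ⟨b, rfl, hg⟩ | rfl
      · exact ⟨b, hn₂, hg⟩
      · exact absurd rfl hnne
  obtain ⟨b, hbs, hgBC⟩ := hb
  -- an A-neighbour of the C'-vertex
  obtain ⟨m₁, m₂, hm₁, hm₂, hmne, f₁, f₂⟩ := cycle_two_nbrs hs hcyc h2
  have ha : ∃ a : A, Sum.inl a ∈ s ∧ G.Adj (.inr (.inr c)) (.inl a) := by
    rcases adjD f₁ with ⟨a, rfl, hg⟩ | rfl
    · exact ⟨a, hm₁, hg⟩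
    · rcases adjD f₂ with ⟨a, rfl, hg⟩ | rfl
      · exact ⟨a, hm₂, hg⟩
      · exact absurd rfl hmne
  obtain ⟨a, has, hgCA⟩ := ha
  have hsub : ({Sum.inl a, Sum.inr (Sum.inl b), Sum.inr (Sum.inr (Sum.inl c)),
      Sum.inr (Sum.inr (Sum.inr c))} : Finset (A ⊕ B ⊕ C ⊕ C)) ⊆ s := by
    simp [Finset.insert_subset_iff, has, hbs, h1, h2]
  have hquadcard : ({Sum.inl a, Sum.inr (Sum.inl b), Sum.inr (Sum.inr (Sum.inl c)),
      Sum.inr (Sum.inr (Sum.inr c))} : Finset (A ⊕ B ⊕ C ⊕ C)).card = 4 := by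
    rw [Finset.card_insert_of_notMem (by simp), Finset.card_insert_of_notMem (by simp),
      Finset.card_insert_of_notMem (by simp), Finset.card_singleton]
  have hseq := (Finset.eq_of_subset_of_card_le hsub (by rw [hcard, hquadcard])).symm
  -- the A–B adjacency
  obtain ⟨k₁, k₂, hk₁, hk₂, hkne, g₁, g₂⟩ := cycle_two_nbrs hs hcyc
    (show Sum.inl a ∈ s from has)
  have hgAB : G.Adj (.inl a) (.inr (.inl b)) := by
    have key : ∀ k, k ∈ s → (auxGraph G).Adj (Sum.inl a) k →
        k = Sum.inr (Sum.inl b) ∨ k = Sum.inr (Sum.inr (Sum.inr c)) := by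
      intro k hk hadj
      rw [hseq] at hk
      simp only [Finset.mem_insert, Finset.mem_singleton] at hk
      rcases adjA hadj with ⟨b', rfl, hg⟩ | ⟨c', rfl, hg⟩ <;> simp_all
    rcases key k₁ hk₁ g₁ with rfl | rfl
    · rcases adjA g₁ with ⟨b', hb', hg⟩ | ⟨c', hc', hg⟩
      · rw [Sum.inr.injEq, Sum.inl.injEq] at hb'; subst hb'; exact hg
      · simp at hc'
    · rcases key k₂ hk₂ g₂ with rfl | rfl
      · rcases adjA g₂ with ⟨b', hb', hg⟩ | ⟨c', hc', hg⟩
        · rw [Sum.inr.injEq, Sum.inl.injEq] at hb'; subst hb'; exact hg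
        · simp at hc'
      · exact absurd rfl hkne
  exact ⟨a, b, hseq, hgAB, hgBC, hgCA⟩


lemma triangle_struct [DecidableEq A] [DecidableEq B] [DecidableEq C]
    (hA : ∀ a a' : A, ¬ G.Adj (.inl a) (.inl a'))
    (hB : ∀ b b' : B, ¬ G.Adj (.inr (.inl b)) (.inr (.inl b')))
    (hC : ∀ c c' : C, ¬ G.Adj (.inr (.inr c)) (.inr (.inr c')))
    {s : Finset (A ⊕ B ⊕ C)} (hs : G.IsNClique 3 s) :
    ∃ (a : A) (b : B) (c : C),
      s = {Sum.inl a, Sum.inr (Sum.inl b), Sum.inr (Sum.inr c)} ∧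
      G.Adj (.inl a) (.inr (.inl b)) ∧ G.Adj (.inr (.inl b)) (.inr (.inr c)) ∧
      G.Adj (.inr (.inr c)) (.inl a) := by
  obtain ⟨x, y, z, hxy, hxz, hyz, rfl⟩ := SimpleGraph.is3Clique_iff.1 hs
  rcases x with a | b | c <;> rcases y with a' | b' | c' <;> rcases z with a'' | b'' | c''
  all_goals first
      | exact absurd hxy (hA _ _) | exact absurd hxy (hB _ _) | exact absurd hxy (hC _ _)
      | exact absurd hxz (hA _ _) | exact absurd hxz (hB _ _) | exact absurd hxz (hC _ _)
      | exact absurd hyz (hA _ _) | exact absurd hyz (hB _ _) | exact absurd hyz (hC _ _)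
      | skip
  · exact ⟨a, b', c'', rfl, hxy, hyz, hxz.symm⟩
  · exact ⟨a, b'', c', by ext w; simp; tauto, hxz, hyz.symm, hxy.symm⟩
  · exact ⟨a', b, c'', by ext w; simp; tauto, hxy.symm, hxz, hyz.symm⟩
  · exact ⟨a'', b, c', by ext w; simp; tauto, hxz.symm, hxy, hyz⟩
  · exact ⟨a', b'', c, by ext w; simp; tauto, hyz, hxz.symm, hxy⟩
  · exact ⟨a'', b', c, by ext w; simp; tauto, hyz.symm, hxy.symm, hxz⟩


end Aux6


open Aux6 in
/-- For a finite tripartite graph `G` with parts `A`, `B`, `C` and its auxiliary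
graph `G'`, writing `t₃(G)` for the number of triangles of `G` and `c₄(H)` for the number of
4-cycles of `H` (as 4-element vertex sets), we have `t₃(G) ≤ c₄(G') ≤ t₃(G) + c₄(G)`. -/
theorem fourCycleCount_auxGraph_bounds {A B C : Type*}
    [Fintype A] [Fintype B] [Fintype C]
    [DecidableEq A] [DecidableEq B] [DecidableEq C]
    (G : SimpleGraph (A ⊕ B ⊕ C))
    (hA : ∀ a a' : A, ¬ G.Adj (.inl a) (.inl a'))
    (hB : ∀ b b' : B, ¬ G.Adj (.inr (.inl b)) (.inr (.inl b')))
    (hC : ∀ c c' : C, ¬ G.Adj (.inr (.inr c)) (.inr (.inr c'))) :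
    (G.cliqueSet 3).ncard ≤ fourCycleCount (auxGraph G) ∧
      fourCycleCount (auxGraph G) ≤ (G.cliqueSet 3).ncard + fourCycleCount G := by
  classical
  set S' : Set (Finset (A ⊕ B ⊕ C ⊕ C)) :=
    {s | ∃ a b c d, s = {a, b, c, d} ∧ IsFourCycle (auxGraph G) a b c d} with hS'def
  set SG : Set (Finset (A ⊕ B ⊕ C)) :=
    {s | ∃ a b c d, s = {a, b, c, d} ∧ IsFourCycle G a b c d} with hSGdef
  have e1 : fourCycleCount (auxGraph G) = S'.ncard := rfl
  have e2 : fourCycleCount G = SG.ncard := rfl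
  constructor
  · -- lower bound
    rw [e1]
    apply Set.ncard_le_ncard_of_injOn (fun s => s.image embC ∪ s.image embD)
    · rintro s hs
      obtain ⟨a, b, c, rfl, h1, h2, h3⟩ :=
        triangle_struct hA hB hC (SimpleGraph.mem_cliqueSet_iff.1 hs)
      refine ⟨Sum.inl a, Sum.inr (Sum.inl b), Sum.inr (Sum.inr (Sum.inl c)),
        Sum.inr (Sum.inr (Sum.inr c)), ?_, by simp, by simp, by simp, by simp, by simp,
        by simp, adj_AB h1, adj_BC h2, adj_CD, adj_DA h3⟩
      have i1 : Finset.image embC ({Sum.inl a, Sum.inr (Sum.inl b), Sum.inr (Sum.inr c)} :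
          Finset (A ⊕ B ⊕ C)) = {Sum.inl a, Sum.inr (Sum.inl b), Sum.inr (Sum.inr (Sum.inl c))} := by
        simp [embC]
      have i2 : Finset.image embD ({Sum.inl a, Sum.inr (Sum.inl b), Sum.inr (Sum.inr c)} :
          Finset (A ⊕ B ⊕ C)) = {Sum.inl a, Sum.inr (Sum.inl b), Sum.inr (Sum.inr (Sum.inr c))} := by
        simp [embD]
      beta_reduce
      rw [i1, i2]
      ext w
      simp only [Finset.mem_union, Finset.mem_insert, Finset.mem_singleton]
      tauto
    · intro s _ t _ h
      have h' : s.image embC ∪ s.image embD = t.image embC ∪ t.image embD := h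
      have hkey : ∀ u : Finset (A ⊕ B ⊕ C),
          ((u.image embC ∪ u.image embD).image pf) = u := by
        intro u
        rw [Finset.image_union, Finset.image_image, Finset.image_image]
        simp [Function.comp_def]
      calc s = ((s.image embC ∪ s.image embD).image pf) := (hkey s).symm
        _ = ((t.image embC ∪ t.image embD).image pf) := by rw [h']
        _ = t := hkey t
  · -- upper bound
    rw [e1, e2]
    set M : Set (Finset (A ⊕ B ⊕ C ⊕ C)) :=
      {s | ∃ c : C, Sum.inr (Sum.inr (Sum.inl c)) ∈ s ∧ Sum.inr (Sum.inr (Sum.inr c)) ∈ s}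
      with hMdef
    have hM : (S' ∩ M).ncard ≤ (G.cliqueSet 3).ncard := by
      apply Set.ncard_le_ncard_of_injOn (Finset.image pf)
      · rintro s ⟨⟨w, x, y, z, hs, hcyc⟩, c, h1, h2⟩
        obtain ⟨a, b, hseq, g1, g2, g3⟩ := Mstruct hs hcyc h1 h2
        rw [SimpleGraph.mem_cliqueSet_iff]
        have : s.image pf = {Sum.inl a, Sum.inr (Sum.inl b), Sum.inr (Sum.inr c)} := by
          rw [hseq]; simp [pf]
        rw [this]
        exact SimpleGraph.is3Clique_triple_iff.2 ⟨g1, g3.symm, g2⟩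
      · rintro s ⟨⟨w, x, y, z, hs, hcyc⟩, c, h1, h2⟩
          t ⟨⟨w', x', y', z', hs', hcyc'⟩, c', h1', h2'⟩ himg
        obtain ⟨a, b, hseq, -, -, -⟩ := Mstruct hs hcyc h1 h2
        obtain ⟨a', b', hseq', -, -, -⟩ := Mstruct hs' hcyc' h1' h2'
        have is : s.image pf = {Sum.inl a, Sum.inr (Sum.inl b), Sum.inr (Sum.inr c)} := by
          rw [hseq]; simp [pf]
        have it : t.image pf = {Sum.inl a', Sum.inr (Sum.inl b'), Sum.inr (Sum.inr c')} := by
          rw [hseq']; simp [pf]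
        have e : ({Sum.inl a, Sum.inr (Sum.inl b), Sum.inr (Sum.inr c)} :
            Finset (A ⊕ B ⊕ C)) = {Sum.inl a', Sum.inr (Sum.inl b'), Sum.inr (Sum.inr c')} := by
          rw [← is, himg, it]
        have ha : (Sum.inl a : A ⊕ B ⊕ C) ∈
            ({Sum.inl a', Sum.inr (Sum.inl b'), Sum.inr (Sum.inr c')} : Finset (A ⊕ B ⊕ C)) := by
          rw [← e]; simp
        have hb : (Sum.inr (Sum.inl b) : A ⊕ B ⊕ C) ∈
            ({Sum.inl a', Sum.inr (Sum.inl b'), Sum.inr (Sum.inr c')} : Finset (A ⊕ B ⊕ C)) := by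
          rw [← e]; simp
        have hc : (Sum.inr (Sum.inr c) : A ⊕ B ⊕ C) ∈
            ({Sum.inl a', Sum.inr (Sum.inl b'), Sum.inr (Sum.inr c')} : Finset (A ⊕ B ⊕ C)) := by
          rw [← e]; simp
        simp only [Finset.mem_insert, Finset.mem_singleton, Sum.inl.injEq, Sum.inr.injEq,
          reduceCtorEq, false_or, or_false] at ha hb hc
        subst ha; subst hb; subst hc
        rw [hseq, hseq']
    have hNM : (S' \ M).ncard ≤ SG.ncard := by
      apply Set.ncard_le_ncard_of_injOn (Finset.image pf)
      · rintro s ⟨⟨w, x, y, z, hs, hcyc⟩, hMs⟩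
        have hMs' : ¬ ∃ c : C, Sum.inr (Sum.inr (Sum.inl c)) ∈ s ∧
            Sum.inr (Sum.inr (Sum.inr c)) ∈ s := hMs
        have hne' : ∀ u v : A ⊕ B ⊕ C ⊕ C, u ∈ s → v ∈ s → u ≠ v → pf u ≠ pf v := by
          intro u v hu hv huv heq
          rcases pf_eq heq huv with ⟨c, rfl, rfl⟩ | ⟨c, rfl, rfl⟩
          · exact hMs' ⟨c, hu, hv⟩
          · exact hMs' ⟨c, hv, hu⟩
        have hadj' : ∀ u v : A ⊕ B ⊕ C ⊕ C, u ∈ s → v ∈ s →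
            (auxGraph G).Adj u v → G.Adj (pf u) (pf v) := by
          intro u v hu hv h
          rcases aux_fold h with heq | hg
          · exact absurd heq (hne' u v hu hv h.ne)
          · exact hg
        have mw : w ∈ s := by rw [hs]; simp
        have mx : x ∈ s := by rw [hs]; simp
        have my : y ∈ s := by rw [hs]; simp
        have mz : z ∈ s := by rw [hs]; simp
        obtain ⟨d1, d2, d3, d4, d5, d6, f1, f2, f3, f4⟩ := hcyc
        exact ⟨pf w, pf x, pf y, pf z, by rw [hs]; simp,
          hne' w x mw mx d1, hne' w y mw my d2, hne' w z mw mz d3,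
          hne' x y mx my d4, hne' x z mx mz d5, hne' y z my mz d6,
          hadj' w x mw mx f1, hadj' x y mx my f2, hadj' y z my mz f3, hadj' z w mz mw f4⟩
      · have key : ∀ s t : Finset (A ⊕ B ⊕ C ⊕ C), s ∈ S' \ M → t ∈ S' \ M →
            s.image pf = t.image pf → s ⊆ t := by
          rintro s t ⟨⟨w₁, x₁, y₁, z₁, hs1, hc1⟩, hMs⟩ ⟨⟨w₂, x₂, y₂, z₂, hs2, hc2⟩, hMt⟩ himg u hu
          have hMs' : ¬ ∃ c : C, Sum.inr (Sum.inr (Sum.inl c)) ∈ s ∧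
              Sum.inr (Sum.inr (Sum.inr c)) ∈ s := hMs
          have hMt' : ¬ ∃ c : C, Sum.inr (Sum.inr (Sum.inl c)) ∈ t ∧
              Sum.inr (Sum.inr (Sum.inr c)) ∈ t := hMt
          have hpu : pf u ∈ t.image pf := by
            rw [← himg]; exact Finset.mem_image_of_mem _ hu
          obtain ⟨v, hv, hpv⟩ := Finset.mem_image.1 hpu
          by_cases huv : u = v
          · exact huv ▸ hv
          have htc : t.card = 4 := by rw [hs2]; exact card4 hc2
          have hBt : ∀ b : B, (Sum.inr (Sum.inl b) : A ⊕ B ⊕ C ⊕ C) ∈ s →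
              (Sum.inr (Sum.inl b) : A ⊕ B ⊕ C ⊕ C) ∈ t := by
            intro b hb
            have : pf (Sum.inr (Sum.inl b) : A ⊕ B ⊕ C ⊕ C) ∈ t.image pf := by
              rw [← himg]; exact Finset.mem_image_of_mem _ hb
            obtain ⟨v', hv', hpv'⟩ := Finset.mem_image.1 this
            rwa [pf_eqB hpv'] at hv'
          have hAt : ∀ a : A, (Sum.inl a : A ⊕ B ⊕ C ⊕ C) ∈ s →
              (Sum.inl a : A ⊕ B ⊕ C ⊕ C) ∈ t := by
            intro a ha
            have : pf (Sum.inl a : A ⊕ B ⊕ C ⊕ C) ∈ t.image pf := by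
              rw [← himg]; exact Finset.mem_image_of_mem _ ha
            obtain ⟨v', hv', hpv'⟩ := Finset.mem_image.1 this
            rwa [pf_eqA hpv'] at hv'
          exfalso
          rcases pf_eq (Eq.symm hpv) huv with ⟨c, hueq, hveq⟩ | ⟨c, hueq, hveq⟩
          · -- v = D c ∈ t, u = C c ∈ s
            subst hveq; subst hueq
            obtain ⟨n₁, n₂, hn₁, hn₂, hnne, e₁, e₂⟩ := cycle_two_nbrs hs1 hc1 hu
            have getB : ∀ n, n ∈ s → (auxGraph G).Adj (Sum.inr (Sum.inr (Sum.inl c))) n →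
                ∃ b, n = Sum.inr (Sum.inl b) := by
              intro n hn e
              rcases adjC e with ⟨b, rfl, -⟩ | rfl
              · exact ⟨b, rfl⟩
              · exact absurd ⟨c, hu, hn⟩ hMs'
            obtain ⟨b₁, rfl⟩ := getB n₁ hn₁ e₁
            obtain ⟨b₂, rfl⟩ := getB n₂ hn₂ e₂
            have hb12 : b₁ ≠ b₂ := fun h => hnne (by rw [h])
            obtain ⟨m₁, m₂, hm₁, hm₂, hmne, f₁, f₂⟩ := cycle_two_nbrs hs2 hc2 hv
            have getA : ∀ m, m ∈ t → (auxGraph G).Adj (Sum.inr (Sum.inr (Sum.inr c))) m →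
                ∃ a, m = Sum.inl a := by
              intro m hm e
              rcases adjD e with ⟨a, rfl, -⟩ | rfl
              · exact ⟨a, rfl⟩
              · exact absurd ⟨c, hm, hv⟩ hMt'
            obtain ⟨a₁, rfl⟩ := getA m₁ hm₁ f₁
            obtain ⟨a₂, rfl⟩ := getA m₂ hm₂ f₂
            have ha12 : a₁ ≠ a₂ := fun h => hmne (by rw [h])
            have h5 : ({Sum.inr (Sum.inr (Sum.inr c)), Sum.inl a₁, Sum.inl a₂,
                Sum.inr (Sum.inl b₁), Sum.inr (Sum.inl b₂)} : Finset (A ⊕ B ⊕ C ⊕ C)) ⊆ t := by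
              simp [Finset.insert_subset_iff, hv, hm₁, hm₂, hBt b₁ hn₁, hBt b₂ hn₂]
            have hc5 : ({Sum.inr (Sum.inr (Sum.inr c)), Sum.inl a₁, Sum.inl a₂,
                Sum.inr (Sum.inl b₁), Sum.inr (Sum.inl b₂)} : Finset (A ⊕ B ⊕ C ⊕ C)).card = 5 := by
              rw [Finset.card_insert_of_notMem (by simp),
                Finset.card_insert_of_notMem (by simp [ha12]),
                Finset.card_insert_of_notMem (by simp),
                Finset.card_insert_of_notMem (by simp [hb12]), Finset.card_singleton]
            have := Finset.card_le_card h5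
            rw [hc5, htc] at this
            omega
          · -- v = C c ∈ t, u = D c ∈ s
            subst hveq; subst hueq
            -- neighbours of u in s are A's
            obtain ⟨n₁, n₂, hn₁, hn₂, hnne, e₁, e₂⟩ := cycle_two_nbrs hs1 hc1 hu
            have getA : ∀ n, n ∈ s → (auxGraph G).Adj (Sum.inr (Sum.inr (Sum.inr c))) n →
                ∃ a, n = Sum.inl a := by
              intro n hn e
              rcases adjD e with ⟨a, rfl, -⟩ | rfl
              · exact ⟨a, rfl⟩
              · exact absurd ⟨c, hn, hu⟩ hMs'
            obtain ⟨a₁, rfl⟩ := getA n₁ hn₁ e₁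
            obtain ⟨a₂, rfl⟩ := getA n₂ hn₂ e₂
            have ha12 : a₁ ≠ a₂ := fun h => hnne (by rw [h])
            -- neighbours of v in t are B's
            obtain ⟨m₁, m₂, hm₁, hm₂, hmne, f₁, f₂⟩ := cycle_two_nbrs hs2 hc2 hv
            have getB : ∀ m, m ∈ t → (auxGraph G).Adj (Sum.inr (Sum.inr (Sum.inl c))) m →
                ∃ b, m = Sum.inr (Sum.inl b) := by
              intro m hm e
              rcases adjC e with ⟨b, rfl, -⟩ | rfl
              · exact ⟨b, rfl⟩
              · exact absurd ⟨c, hv, hm⟩ hMt'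
            obtain ⟨b₁, rfl⟩ := getB m₁ hm₁ f₁
            obtain ⟨b₂, rfl⟩ := getB m₂ hm₂ f₂
            have hb12 : b₁ ≠ b₂ := fun h => hmne (by rw [h])
            have h5 : ({Sum.inr (Sum.inr (Sum.inl c)), Sum.inl a₁, Sum.inl a₂,
                Sum.inr (Sum.inl b₁), Sum.inr (Sum.inl b₂)} : Finset (A ⊕ B ⊕ C ⊕ C)) ⊆ t := by
              simp [Finset.insert_subset_iff, hv, hm₁, hm₂, hAt a₁ hn₁, hAt a₂ hn₂]
            have hc5 : ({Sum.inr (Sum.inr (Sum.inl c)), Sum.inl a₁, Sum.inl a₂,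
                Sum.inr (Sum.inl b₁), Sum.inr (Sum.inl b₂)} : Finset (A ⊕ B ⊕ C ⊕ C)).card = 5 := by
              rw [Finset.card_insert_of_notMem (by simp),
                Finset.card_insert_of_notMem (by simp [ha12]),
                Finset.card_insert_of_notMem (by simp),
                Finset.card_insert_of_notMem (by simp [hb12]), Finset.card_singleton]
            have := Finset.card_le_card h5
            rw [hc5, htc] at this
            omega
        intro s hs t ht himg
        exact Finset.Subset.antisymm (key s t hs ht himg) (key t s ht hs himg.symm)
    have hsplit : S'.ncard ≤ (S' ∩ M).ncard + (S' \ M).ncard := by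
      conv_lhs => rw [← Set.inter_union_diff S' M]
      exact Set.ncard_union_le _ _
    exact hsplit.trans (Nat.add_le_add hM hNM)
end

section
/- With the hashed weight function w' built from w, x and the values (y_{v,j}), assume x ≠ 0. Then for every tuple (v_1, …, v_k) with v_i ∈ V_i for all i, one has ∑_{1 ≤ i < j ≤ k} w'(v_i, v_j) = 0 in F_p if and only if ∑_{1 ≤ i < j ≤ k} w(v_i, v_j) = 0 in F_p; that is, (v_1,…,v_k) is a zero-weight tuple with respect to w' if and only if it is a zero-weight tuple with respect to w. -/
open Finset

/-- With the hashed weights `w'(v_i, v_j) = x·w(v_i, v_j) + y_{v_i, j} + y_{v_j, i}`,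
where each vector `(y_{v,j})_{j ≠ i}` sums to zero and `x ≠ 0`, a tuple `(v_1, …, v_k)` has
total hashed weight zero iff it has total original weight zero. -/
theorem hashed_weight_zero_iff (p : ℕ) [Fact p.Prime] (k : ℕ) (hk : 3 ≤ k)
    (V : Fin k → Type*)
    (w : ∀ i j : Fin k, V i → V j → ZMod p)
    (x : ZMod p) (hx : x ≠ 0)
    (y : ∀ i : Fin k, V i → Fin k → ZMod p)
    (hy : ∀ (i : Fin k) (v : V i), ∑ j ∈ Finset.univ \ {i}, y i v j = 0)
    (v : ∀ i : Fin k, V i) :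
    (∑ i : Fin k, ∑ j ∈ Finset.univ.filter (fun j => i < j),
        (x * w i j (v i) (v j) + y i (v i) j + y j (v j) i) = 0) ↔
      (∑ i : Fin k, ∑ j ∈ Finset.univ.filter (fun j => i < j), w i j (v i) (v j) = 0) := by
  classical
  set f : Fin k → Fin k → ZMod p := fun i j => y i (v i) j with hf
  have swap : (∑ i : Fin k, ∑ j ∈ Finset.univ.filter (fun j => i < j), f j i)
      = ∑ i : Fin k, ∑ j ∈ Finset.univ.filter (fun j => j < i), f i j := by
    rw [Finset.sum_comm' (s' := fun j => Finset.univ.filter (fun i => i < j))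
      (t' := (Finset.univ : Finset (Fin k)))]
    intro a b; simp
  have key : (∑ i : Fin k, ∑ j ∈ Finset.univ.filter (fun j => i < j), (f i j + f j i)) = 0 := by
    have : (∑ i : Fin k, ∑ j ∈ Finset.univ.filter (fun j => i < j), (f i j + f j i))
        = ∑ i : Fin k, ((∑ j ∈ Finset.univ.filter (fun j => i < j), f i j)
          + ∑ j ∈ Finset.univ.filter (fun j => j < i), f i j) := by
      simp only [Finset.sum_add_distrib, swap]
    rw [this]
    have : ∀ i : Fin k, ((∑ j ∈ Finset.univ.filter (fun j => i < j), f i j)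
        + ∑ j ∈ Finset.univ.filter (fun j => j < i), f i j)
        = ∑ j ∈ Finset.univ \ {i}, f i j := by
      intro i
      rw [← Finset.sum_union]
      · apply Finset.sum_congr _ (fun _ _ => rfl)
        ext j
        simp [lt_or_lt_iff_ne, ne_comm, eq_comm]
      · rw [Finset.disjoint_filter]
        intro j _ h1 h2
        exact absurd (h1.trans h2) (lt_irrefl i)
    simp only [this]
    exact Finset.sum_eq_zero fun i _ => hy i (v i)
  have main : (∑ i : Fin k, ∑ j ∈ Finset.univ.filter (fun j => i < j),
      (x * w i j (v i) (v j) + y i (v i) j + y j (v j) i))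
      = x * ∑ i : Fin k, ∑ j ∈ Finset.univ.filter (fun j => i < j), w i j (v i) (v j) := by
    have : ∀ (i j : Fin k), x * w i j (v i) (v j) + y i (v i) j + y j (v j) i
        = x * w i j (v i) (v j) + (f i j + f j i) := by
      intro i j; simp [hf]; ring
    have key2 : ((∑ i : Fin k, ∑ j ∈ Finset.univ.filter (fun j => i < j), f i j)
        + ∑ i : Fin k, ∑ j ∈ Finset.univ.filter (fun j => i < j), f j i) = 0 := by
      simpa [Finset.sum_add_distrib] using key
    simp only [this, Finset.sum_add_distrib, ← Finset.mul_sum]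
    rw [key2, add_zero]
  rw [main, mul_eq_zero]
  simp [hx]
end
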